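/- arXiv:2507.08462 — 7 statements merged into one kernel-verified Lean document; each statement's English description precedes it below -/
import Mathlib

section
/- Let 0 < α < 1, x ≥ 0, and set u = x − α(e^x − 1). Assume u ≥ 0. Then x is the smallest nonnegative solution of y = u + α(e^y − 1) if and only if α e^x ≤ 1. -/
/-!
Let `g y = u + α (eʸ - 1) - y`, so that the fixed points are the zeros of `g`, and `g x = 0`.
Since `g' y = α eʸ - 1`, `g` decreases strictly on `(-∞, -log α]` and increases strictly on
`[-log α, ∞)`; the condition `α eˣ ≤ 1` says `x ≤ -log α`.
If it holds, `g` is injective on `[0, x]`, so `x` is the only zero there.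
If it fails, then `g (-log α) < g x = 0 ≤ u = g 0`, and the intermediate value theorem gives a
zero in `[0, -log α]`, strictly left of `x`.
-/

open Real Set

lemma mul_exp_lt_one_iff {α t : ℝ} (hα : 0 < α) : α * exp t < 1 ↔ t < -log α := by
  rw [← log_inv, lt_log_iff_exp_lt (inv_pos.mpr hα), ← mul_inv_cancel₀ hα.ne',
    mul_lt_mul_iff_of_pos_left hα]

lemma mul_exp_le_one_iff {α t : ℝ} (hα : 0 < α) : α * exp t ≤ 1 ↔ t ≤ -log α := by
  rw [← log_inv, le_log_iff_exp_le (inv_pos.mpr hα), ← mul_inv_cancel₀ hα.ne',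
    mul_le_mul_iff_of_pos_left hα]

section FixedPointGap

variable {α : ℝ} (u : ℝ)

lemma hasDerivAt_exp_affine_sub_id (t : ℝ) :
    HasDerivAt (fun y => u + α * (exp y - 1) - y) (α * exp t - 1) t := by
  simpa using ((((hasDerivAt_exp t).sub_const 1).const_mul α).const_add u).fun_sub (hasDerivAt_id' t)

lemma continuous_exp_affine_sub_id : Continuous fun y => u + α * (exp y - 1) - y := by
  fun_prop

lemma strictAntiOn_exp_affine_sub_id (hα : 0 < α) :
    StrictAntiOn (fun y => u + α * (exp y - 1) - y) (Iic (-log α)) := by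
  refine strictAntiOn_of_deriv_neg (convex_Iic _)
    (continuous_exp_affine_sub_id u).continuousOn fun t ht => ?_
  rw [interior_Iic] at ht
  rw [(hasDerivAt_exp_affine_sub_id u t).deriv, sub_neg]
  exact (mul_exp_lt_one_iff hα).mpr ht

lemma strictMonoOn_exp_affine_sub_id (hα : 0 < α) :
    StrictMonoOn (fun y => u + α * (exp y - 1) - y) (Ici (-log α)) := by
  refine strictMonoOn_of_deriv_pos (convex_Ici _)
    (continuous_exp_affine_sub_id u).continuousOn fun t ht => ?_
  rw [interior_Ici] at ht
  rw [(hasDerivAt_exp_affine_sub_id u t).deriv, sub_pos, ← not_le, mul_exp_le_one_iff hα]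
  exact not_le.mpr ht

end FixedPointGap

theorem stmt_3 (α x : ℝ) (hα0 : 0 < α) (hα1 : α < 1) (hx : 0 ≤ x)
    (u : ℝ) (hu_def : u = x - α * (Real.exp x - 1)) (hu : 0 ≤ u) :
    IsLeast {y : ℝ | 0 ≤ y ∧ y = u + α * (Real.exp y - 1)} x ↔ α * Real.exp x ≤ 1 := by
  set g : ℝ → ℝ := fun y => u + α * (exp y - 1) - y
  have fixed_iff (y : ℝ) : y = u + α * (exp y - 1) ↔ g y = 0 := by
    simp only [g]; constructor <;> intro h <;> linarith
  have hgx : g x = 0 := by simp only [g, hu_def]; ring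
  simp only [fixed_iff]
  rw [mul_exp_le_one_iff hα0]
  constructor
  · intro hleast
    by_contra! hcx
    have hc : 0 ≤ -log α := by linarith [log_neg hα0 hα1]
    have hgc : g (-log α) < 0 :=
      hgx ▸ strictMonoOn_exp_affine_sub_id u hα0 self_mem_Ici hcx.le hcx
    obtain ⟨y, hy, hgy⟩ := intermediate_value_Icc' hc (continuous_exp_affine_sub_id u).continuousOn
      ⟨hgc.le, by simpa [g] using hu⟩
    linarith [hleast.2 ⟨hy.1, hgy⟩, hy.2]
  · intro hxc
    refine ⟨⟨hx, hgx⟩, fun y ⟨_, hgy⟩ => ?_⟩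
    by_contra! hyx
    exact (strictAntiOn_exp_affine_sub_id u hα0 (hyx.le.trans hxc) hxc hyx).ne (hgx.trans hgy.symm)
end

section
/- Let H be an M×M matrix with nonnegative entries, u ∈ ℝ_+^M, and suppose x ∈ ℝ_+^M satisfies x = u + H(e^x − 1) (exponential coordinatewise). Then for every n ≥ 0, ψ_u^{n+1}(0) − ψ_u^n(0) ≼ (H·diag(e^x))^n u, where ψ_u(y) = u + H(e^y − 1). Consequently, x' := lim_n ψ_u^n(0) satisfies x' ≼ Σ_{n≥0} (H·diag(e^x))^n u. -/
/-!
The map `ψ_u(y) = u + H (e^y - 1)` is monotone, so its iterates from `0` increase and stay below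
the fixed point `x`. Between two such iterates `b ≤ a ≤ x` the exponential is `e^x`-Lipschitz,
hence `ψ_u a - ψ_u b ≼ H diag(e^x) (a - b)`; iterating this bounds the `n`-th increment by
`(H diag(e^x))^n u`, and summing the increments bounds the limit.
-/

open Filter Matrix

lemma Real.exp_sub_exp_le_exp_mul_sub {a b c : ℝ} (hba : b ≤ a) (hac : a ≤ c) :
    Real.exp a - Real.exp b ≤ Real.exp c * (a - b) :=
  calc Real.exp a - Real.exp b = Real.exp a * (1 - Real.exp (b - a)) := by
        rw [Real.exp_sub]; field_simp
    _ ≤ Real.exp a * (a - b) := by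
        gcongr ?_ * ?_; linarith [Real.add_one_le_exp (b - a)]
    _ ≤ Real.exp c * (a - b) := by gcongr

section NonnegMatrix

variable {ι : Type*} [Fintype ι] {A : Matrix ι ι ℝ}

lemma Matrix.monotone_mulVec_of_nonneg (hA : ∀ i j, 0 ≤ A i j) : Monotone (A *ᵥ ·) :=
  fun _ _ h i => Finset.sum_le_sum fun j _ => mul_le_mul_of_nonneg_left (h j) (hA i j)

lemma Matrix.sub_le_pow_mulVec_of_sub_le_mulVec [DecidableEq ι] (hA : ∀ i j, 0 ≤ A i j)
    {s : ℕ → ι → ℝ}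
    (hs : ∀ n, s (n + 2) - s (n + 1) ≤ A *ᵥ (s (n + 1) - s n)) (n : ℕ) :
    s (n + 1) - s n ≤ (A ^ n) *ᵥ (s 1 - s 0) := by
  induction n with
  | zero => simp
  | succ n ih =>
    calc s (n + 2) - s (n + 1) ≤ A *ᵥ (s (n + 1) - s n) := hs n
      _ ≤ A *ᵥ ((A ^ n) *ᵥ (s 1 - s 0)) := monotone_mulVec_of_nonneg hA ih
      _ = (A ^ (n + 1)) *ᵥ (s 1 - s 0) := by rw [mulVec_mulVec, ← pow_succ']

end NonnegMatrix

lemma ENNReal.ofReal_le_tsum_of_tendsto_of_sub_le {s t : ℕ → ℝ} {L : ℝ} (hs0 : s 0 = 0)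
    (hs : Monotone s) (hst : ∀ n, s (n + 1) - s n ≤ t n) (hL : Tendsto s atTop (nhds L)) :
    ENNReal.ofReal L ≤ ∑' n, ENNReal.ofReal (t n) := by
  have ht : ∀ n, 0 ≤ t n := fun n => (sub_nonneg.2 (hs n.le_succ)).trans (hst n)
  refine le_of_tendsto ((ENNReal.continuous_ofReal.tendsto L).comp hL) (Eventually.of_forall ?_)
  intro N
  calc ENNReal.ofReal (s N) = ENNReal.ofReal (∑ n ∈ Finset.range N, (s (n + 1) - s n)) := by
        rw [Finset.sum_range_sub, hs0, sub_zero]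
    _ ≤ ENNReal.ofReal (∑ n ∈ Finset.range N, t n) :=
        ENNReal.ofReal_le_ofReal (Finset.sum_le_sum fun n _ => hst n)
    _ = ∑ n ∈ Finset.range N, ENNReal.ofReal (t n) :=
        ENNReal.ofReal_sum_of_nonneg fun n _ => ht n
    _ ≤ ∑' n, ENNReal.ofReal (t n) := ENNReal.sum_le_tsum _

section ExpAffine

variable {ι : Type*} [Fintype ι] (H : Matrix ι ι ℝ) (u : ι → ℝ)

noncomputable def expAffine (y : ι → ℝ) : ι → ℝ := u + H *ᵥ fun i => Real.exp (y i) - 1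

variable {H}

@[simp]
lemma expAffine_zero : expAffine H u 0 = u := by
  simp only [expAffine, Pi.zero_apply, Real.exp_zero, sub_self]
  exact add_eq_left.2 (mulVec_zero H)

lemma monotone_expAffine (hH : ∀ i j, 0 ≤ H i j) : Monotone (expAffine H u) :=
  fun _ _ h => add_le_add_right
    (monotone_mulVec_of_nonneg hH fun i => by gcongr; exact h i) u

lemma expAffine_sub_le [DecidableEq ι] (hH : ∀ i j, 0 ≤ H i j) {a b x : ι → ℝ} (hba : b ≤ a)
    (hax : a ≤ x) :
    expAffine H u a - expAffine H u b ≤ (H * diagonal fun i => Real.exp (x i)) *ᵥ (a - b) := by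
  have hdiff :
      expAffine H u a - expAffine H u b = H *ᵥ fun i => Real.exp (a i) - Real.exp (b i) := by
    simp only [expAffine, add_sub_add_left_eq_sub, ← mulVec_sub]
    congr 1; ext i; simp
  rw [hdiff, ← mulVec_mulVec]
  refine monotone_mulVec_of_nonneg hH fun i => ?_
  rw [mulVec_diagonal]
  exact Real.exp_sub_exp_le_exp_mul_sub (hba i) (hax i)

end ExpAffine

theorem stmt_6 {M : ℕ} (H : Matrix (Fin M) (Fin M) ℝ)
    (hH : ∀ i j, 0 ≤ H i j) (u : Fin M → ℝ) (hu : 0 ≤ u)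
    (x : Fin M → ℝ) (hx : 0 ≤ x)
    (hfix : x = u + H.mulVec (fun i => Real.exp (x i) - 1))
    (ψ : (Fin M → ℝ) → (Fin M → ℝ))
    (hψ : ∀ y, ψ y = u + H.mulVec (fun i => Real.exp (y i) - 1))
    (x' : Fin M → ℝ)
    (hx' : Tendsto (fun n : ℕ => ψ^[n] 0) atTop (nhds x')) :
    (∀ n : ℕ,
        ψ^[n + 1] 0 - ψ^[n] 0 ≤
          ((H * Matrix.diagonal fun i => Real.exp (x i)) ^ n).mulVec u) ∧
    (∀ m : Fin M,
        ENNReal.ofReal (x' m) ≤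
          ∑' n : ℕ,
            ENNReal.ofReal
              (((H * Matrix.diagonal fun i => Real.exp (x i)) ^ n).mulVec u m)) := by
  have hψ_eq : ψ = expAffine H u := funext hψ
  have hψ_mono : Monotone ψ := hψ_eq ▸ monotone_expAffine u hH
  have hiter_mono : Monotone fun n => ψ^[n] 0 :=
    hψ_mono.monotone_iterate_of_le_map (by simpa [hψ_eq] using hu)
  have hiter_le (n : ℕ) : ψ^[n] 0 ≤ x :=
    calc ψ^[n] 0 ≤ ψ^[n] x := hψ_mono.iterate n hx
      _ = x := Function.iterate_fixed (by rw [hψ, ← hfix]) n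
  have hAnn : ∀ i j, 0 ≤ (H * diagonal fun i => Real.exp (x i)) i j := fun i j => by
    rw [mul_diagonal]; exact mul_nonneg (hH i j) (Real.exp_nonneg _)
  have hincr (n : ℕ) :
      ψ^[n + 1] 0 - ψ^[n] 0 ≤ (H * diagonal fun i => Real.exp (x i)) ^ n *ᵥ u := by
    refine (sub_le_pow_mulVec_of_sub_le_mulVec hAnn (s := fun n => ψ^[n] 0) (fun k => ?_) n).trans
      (by simp [hψ_eq])
    have h := expAffine_sub_le u hH (hiter_mono k.le_succ) (hiter_le (k + 1))
    rwa [← hψ_eq, ← Function.iterate_succ_apply' ψ, ← Function.iterate_succ_apply' ψ] at h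
  exact ⟨hincr, fun m => ENNReal.ofReal_le_tsum_of_tendsto_of_sub_le (by simp)
    (fun _ _ h => hiter_mono h m) (fun n => hincr n m) (tendsto_pi_nhds.1 hx' m)⟩
end

section
/- Let (z_n) be a sequence in ℝ_+^M with z_{n+1} ≼ H(e^{z_n} − 1) for all n, where H is a nonnegative M×M matrix with spectral radius < 1, and suppose |z_n|_∞ → 0 and z_0 ≼ L. Then there exists a constant C < ∞ such that z_n ≼ C H^n L for all n. -/
/-!
Since `exp x - 1 ≤ x * exp ‖v‖` for `0 ≤ x ≤ ‖v‖` (sup norm) and `H ≥ 0`, the recursion iterates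
to `z (N + m) ≤ exp (∑ k < m, ‖z (N + k)‖) • H ^ m *ᵥ z N`. By Gelfand's formula
`‖H ^ m‖ ≤ t ^ m` eventually, for some `t < 1`; once `‖z k‖ < ε` for all `k ≥ N`, with
`e^ε t < 1`, the norms `‖z (N + m)‖` decay geometrically. So `∑ ‖z k‖ < ∞`, and the case `N = 0`
gives the claim with `C = exp (∑ ‖z k‖)`.
-/

open Filter Finset Real Matrix
open scoped NNReal ENNReal Topology Matrix.Norms.Operator

lemma Real.exp_sub_one_le_mul_exp (x : ℝ) : exp x - 1 ≤ x * exp x := by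
  have h : exp (-x) * exp x = 1 := by rw [← Real.exp_add, neg_add_cancel, Real.exp_zero]
  nlinarith [mul_le_mul_of_nonneg_right (Real.add_one_le_exp (-x)) (exp_pos x).le]

lemma pi_norm_le_of_nonneg_of_le {ι : Type*} [Fintype ι] {v w : ι → ℝ} (hv : 0 ≤ v)
    (h : v ≤ w) : ‖v‖ ≤ ‖w‖ :=
  (pi_norm_le_iff_of_nonneg (norm_nonneg w)).2 fun i => (Real.norm_of_nonneg (hv i)).trans_le
    ((h i).trans ((le_norm_self _).trans (norm_le_pi_norm w i)))

theorem spectrum.eventually_norm_pow_le_of_spectralRadius_lt {A : Type*} [NormedRing A]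
    [NormedAlgebra ℂ A] [CompleteSpace A] (a : A) {t : ℝ≥0} (ht : spectralRadius ℂ a < t) :
    ∀ᶠ n in atTop, ‖a ^ n‖ ≤ (t : ℝ) ^ n := by
  filter_upwards [(pow_norm_pow_one_div_tendsto_nhds_spectralRadius a).eventually_lt_const ht,
    eventually_ne_atTop 0] with n hn hn0
  rw [← ENNReal.ofReal_coe_nnreal] at hn
  replace hn := (ENNReal.ofReal_lt_ofReal_iff'.1 hn).1
  calc ‖a ^ n‖ = (‖a ^ n‖ ^ ((n : ℝ)⁻¹)) ^ n := (rpow_inv_natCast_pow (norm_nonneg _) hn0).symm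
    _ ≤ (t : ℝ) ^ n := pow_le_pow_left₀ (by positivity) (by simpa using hn.le) n

lemma summable_of_tendsto_zero_of_le_exp_sum_mul_pow {a : ℕ → ℝ} (ha : 0 ≤ a)
    (hlim : Tendsto a atTop (𝓝 0)) {t : ℝ} (ht0 : 0 < t) (ht1 : t < 1)
    (h : ∀ᶠ m in atTop, ∀ N, a (N + m) ≤ exp (∑ k ∈ range m, a (N + k)) * t ^ m * a N) :
    Summable a := by
  obtain ⟨q, htq, hq1⟩ := exists_between ht1
  have hq0 : 0 < q := ht0.trans htq
  have hε : 0 < log (q / t) := log_pos ((one_lt_div ht0).2 htq)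
  have hεq : exp (log (q / t)) * t = q := by
    rw [exp_log (div_pos hq0 ht0), div_mul_cancel₀ q ht0.ne']
  obtain ⟨N, hN⟩ := eventually_atTop.1 (hlim.eventually (gt_mem_nhds hε))
  obtain ⟨N₁, hN₁⟩ := eventually_atTop.1 h
  have hgeom : ∀ m ≥ N₁, a (N + m) ≤ a N * q ^ m := by
    intro m hm
    have hsum : ∑ k ∈ range m, a (N + k) ≤ m * log (q / t) := by
      simpa using Finset.sum_le_card_nsmul (range m) _ _ fun k _ => (hN (N + k) (by omega)).le
    calc a (N + m) ≤ exp (∑ k ∈ range m, a (N + k)) * t ^ m * a N := hN₁ m hm N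
      _ ≤ exp (m * log (q / t)) * t ^ m * a N := by gcongr; exact ha N
      _ = a N * q ^ m := by rw [exp_nat_mul, ← mul_pow, hεq, mul_comm]
  refine (summable_nat_add_iff (N + N₁)).1 <| .of_nonneg_of_le (fun m => ha _) (fun m => ?_)
    ((summable_geometric_of_lt_one hq0.le hq1).mul_left (a N * q ^ N₁))
  calc a (m + (N + N₁)) = a (N + (N₁ + m)) := by ring_nf
    _ ≤ a N * q ^ (N₁ + m) := hgeom _ (by omega)
    _ = a N * q ^ N₁ * q ^ m := by rw [pow_add]; ring

namespace Matrix

section Nonneg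

variable {m n α : Type*} [Fintype n] [Semiring α] [PartialOrder α] [IsOrderedRing α]

lemma mulVec_mono_of_nonneg {A : Matrix m n α} (hA : ∀ i j, 0 ≤ A i j) {v w : n → α}
    (h : v ≤ w) : A *ᵥ v ≤ A *ᵥ w := fun i =>
  Finset.sum_le_sum fun j _ => mul_le_mul_of_nonneg_left (h j) (hA i j)

lemma mulVec_nonneg_of_nonneg {A : Matrix m n α} (hA : ∀ i j, 0 ≤ A i j) {v : n → α}
    (hv : 0 ≤ v) : 0 ≤ A *ᵥ v := by
  simpa using mulVec_mono_of_nonneg hA hv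

end Nonneg

variable {ι : Type*} [Fintype ι]

lemma mulVec_exp_sub_one_le {H : Matrix ι ι ℝ} (hH : ∀ i j, 0 ≤ H i j) {v : ι → ℝ}
    (hv : 0 ≤ v) : H *ᵥ (fun i => exp (v i) - 1) ≤ exp ‖v‖ • H *ᵥ v := by
  rw [← mulVec_smul]
  refine mulVec_mono_of_nonneg hH fun i => ?_
  calc exp (v i) - 1 ≤ v i * exp (v i) := exp_sub_one_le_mul_exp _
    _ ≤ v i * exp ‖v‖ := by
      gcongr
      · exact hv i
      · exact (le_norm_self _).trans (norm_le_pi_norm v i)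
    _ = (exp ‖v‖ • v) i := by simp [mul_comm]

lemma linfty_opNorm_map_ofReal {κ : Type*} [Fintype κ] (A : Matrix ι κ ℝ) :
    ‖A.map ((↑) : ℝ → ℂ)‖ = ‖A‖ := by
  simp [linfty_opNorm_def]

variable [DecidableEq ι]

lemma le_exp_sum_smul_pow_mulVec {H : Matrix ι ι ℝ} (hH : ∀ i j, 0 ≤ H i j)
    {z : ℕ → ι → ℝ} {a : ℕ → ℝ} (h : ∀ n, z (n + 1) ≤ exp (a n) • H *ᵥ z n) (N m : ℕ) :
    z (N + m) ≤ exp (∑ k ∈ range m, a (N + k)) • (H ^ m) *ᵥ z N := by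
  induction m with
  | zero => simp
  | succ m ih =>
    calc z (N + m + 1) ≤ exp (a (N + m)) • H *ᵥ z (N + m) := h _
      _ ≤ exp (a (N + m)) • H *ᵥ (exp (∑ k ∈ range m, a (N + k)) • (H ^ m) *ᵥ z N) :=
        smul_le_smul_of_nonneg_left (mulVec_mono_of_nonneg hH ih) (exp_nonneg _)
      _ = exp (∑ k ∈ range (m + 1), a (N + k)) • (H ^ (m + 1)) *ᵥ z N := by
        rw [mulVec_smul, mulVec_mulVec, ← pow_succ', smul_smul, ← exp_add, sum_range_succ,
          add_comm (a _)]

lemma exists_lt_one_eventually_norm_pow_le (H : Matrix ι ι ℝ)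
    (hH : ∀ μ ∈ spectrum ℂ (H.map ((↑) : ℝ → ℂ)), ‖μ‖ < 1) :
    ∃ t : ℝ, 0 < t ∧ t < 1 ∧ ∀ᶠ n in atTop, ‖H ^ n‖ ≤ t ^ n := by
  have hρ : spectralRadius ℂ (H.map ((↑) : ℝ → ℂ)) < 1 := by
    nontriviality Matrix ι ι ℂ
    exact_mod_cast spectrum.spectralRadius_lt_of_forall_lt _ (r := 1) fun μ hμ => by
      exact_mod_cast hH μ hμ
  obtain ⟨t, hρt, ht1⟩ := ENNReal.lt_iff_exists_nnreal_btwn.1 hρ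
  refine ⟨t, by exact_mod_cast zero_le.trans_lt hρt, by exact_mod_cast ht1, ?_⟩
  filter_upwards [spectrum.eventually_norm_pow_le_of_spectralRadius_lt _ hρt] with n hn
  have hmap : H.map ((↑) : ℝ → ℂ) ^ n = (H ^ n).map (↑) := (H.map_pow Complex.ofRealHom n).symm
  rwa [hmap, linfty_opNorm_map_ofReal] at hn

end Matrix

theorem stmt_12 {M : ℕ} (H : Matrix (Fin M) (Fin M) ℝ)
    (hH : ∀ i j, 0 ≤ H i j)
    (hspr : ∀ μ ∈ spectrum ℂ (H.map (Complex.ofReal ·)), ‖μ‖ < 1)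
    (L : Fin M → ℝ) (hL : 0 ≤ L)
    (z : ℕ → Fin M → ℝ) (hz : ∀ n, 0 ≤ z n) (hz0 : z 0 ≤ L)
    (hrec : ∀ n, z (n + 1) ≤ H.mulVec (fun i => Real.exp (z n i) - 1))
    (hz_lim : Filter.Tendsto (fun n => ‖z n‖) Filter.atTop (nhds 0)) :
    ∃ C : ℝ, ∀ n : ℕ, z n ≤ C • (H ^ n).mulVec L := by
  have hiter := le_exp_sum_smul_pow_mulVec hH
    fun n => (hrec n).trans (mulVec_exp_sub_one_le hH (hz n))
  obtain ⟨t, ht0, ht1, hHt⟩ := H.exists_lt_one_eventually_norm_pow_le hspr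
  have hsum : Summable fun n => ‖z n‖ := by
    refine summable_of_tendsto_zero_of_le_exp_sum_mul_pow (fun n => norm_nonneg _) hz_lim ht0 ht1
      (hHt.mono fun m hm N => ?_)
    calc ‖z (N + m)‖ ≤ ‖exp (∑ k ∈ range m, ‖z (N + k)‖) • (H ^ m) *ᵥ z N‖ :=
          pi_norm_le_of_nonneg_of_le (hz _) (hiter N m)
      _ ≤ exp (∑ k ∈ range m, ‖z (N + k)‖) * (‖H ^ m‖ * ‖z N‖) := by
          rw [norm_smul, norm_of_nonneg (exp_nonneg _)]
          gcongr
          exact linfty_opNorm_mulVec _ _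
      _ ≤ exp (∑ k ∈ range m, ‖z (N + k)‖) * t ^ m * ‖z N‖ := by
          rw [← mul_assoc]; gcongr
  refine ⟨exp (∑' n, ‖z n‖), fun n => ?_⟩
  calc z n ≤ exp (∑ k ∈ range n, ‖z k‖) • (H ^ n) *ᵥ z 0 := by simpa using hiter 0 n
    _ ≤ exp (∑' k, ‖z k‖) • (H ^ n) *ᵥ L :=
      smul_le_smul (exp_le_exp.2 (hsum.sum_le_tsum _ fun k _ => norm_nonneg _))
        (mulVec_mono_of_nonneg (pow_apply_nonneg hH n) hz0) (exp_nonneg _)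
        (mulVec_nonneg_of_nonneg (pow_apply_nonneg hH n) hL)
end

section
/- Let v, w : ℝ² → ℝ_{≥0} be measurable with ‖v‖ := sup_s ∫v(s,x)dx < ∞ and sup_x ∫w(x,t)dt < ∞. Define R_v(s,t) = ∫_t^∞ v(s,x)dx, R_v^∞(d) = sup_s R_v(s, s+d), and similarly for w and v⋆w, where (v⋆w)(s,t) = ∫ v(s,x)w(x,t)dx. Then for all d ≥ 0 and p ∈ [0,1], with q = 1 − p: R_{v⋆w}^∞(d) ≤ ‖v‖ · R_w^∞(q d) + R_v^∞(p d) · ‖w‖. -/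
open MeasureTheory Set

open scoped ENNReal

theorem lintegral_lintegral_mul_swap {α β : Type*} [MeasurableSpace α] [MeasurableSpace β]
    {μ : Measure α} {ν : Measure β} [SFinite μ] [SFinite ν] {f : α → ℝ≥0∞}
    {g : α → β → ℝ≥0∞} (hf : Measurable f) (hg : Measurable (Function.uncurry g)) :
    ∫⁻ t, ∫⁻ x, f x * g x t ∂μ ∂ν = ∫⁻ x, f x * ∫⁻ t, g x t ∂ν ∂μ := by
  have hmeas : Measurable (Function.uncurry fun t x => f x * g x t) :=
    (hf.comp measurable_snd).mul (hg.comp measurable_swap)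
  rw [lintegral_lintegral_swap hmeas.aemeasurable]
  exact lintegral_congr fun x => lintegral_const_mul _ (hg.comp measurable_prodMk_left)

theorem lintegral_mul_le_of_le_of_le {α : Type*} [MeasurableSpace α] {μ : Measure α}
    {f g : α → ℝ≥0∞} {A : Set α} {a b : ℝ≥0∞} (hf : Measurable f) (hA : MeasurableSet A)
    (hga : ∀ x ∉ A, g x ≤ a) (hgb : ∀ x ∈ A, g x ≤ b) :
    ∫⁻ x, f x * g x ∂μ ≤ (∫⁻ x, f x ∂μ) * a + (∫⁻ x in A, f x ∂μ) * b := by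
  rw [← lintegral_add_compl _ hA, add_comm]
  gcongr ?_ + ?_
  · calc ∫⁻ x in Aᶜ, f x * g x ∂μ
        ≤ ∫⁻ x in Aᶜ, f x * a ∂μ :=
          setLIntegral_mono' hA.compl fun x hx => by gcongr; exact hga x hx
      _ ≤ ∫⁻ x, f x * a ∂μ := setLIntegral_le_lintegral _ _
      _ = (∫⁻ x, f x ∂μ) * a := lintegral_mul_const a hf
  · calc ∫⁻ x in A, f x * g x ∂μ
        ≤ ∫⁻ x in A, f x * b ∂μ :=
          setLIntegral_mono' hA fun x hx => by gcongr; exact hgb x hx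
      _ = (∫⁻ x in A, f x ∂μ) * b := lintegral_mul_const b hf

theorem stmt_14_general (v w : ℝ → ℝ → ENNReal)
    (hv : Measurable (Function.uncurry v)) (hw : Measurable (Function.uncurry w)) :
    ∀ d : ℝ, 0 ≤ d → ∀ p : ℝ, 0 ≤ p → p ≤ 1 →
      (⨆ s, ∫⁻ t in Ici (s + d), ∫⁻ x, v s x * w x t) ≤
        (⨆ s, ∫⁻ x, v s x) * (⨆ x, ∫⁻ t in Ici (x + (1 - p) * d), w x t) +
          (⨆ s, ∫⁻ x in Ici (s + p * d), v s x) * (⨆ x, ∫⁻ t, w x t) := by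
  intro d _ p _ _
  refine iSup_le fun s => ?_
  have hvs : Measurable (v s) := hv.comp measurable_prodMk_left
  rw [lintegral_lintegral_mul_swap hvs hw]
  -- Split at `x = s + p * d`: below it, `[s + d, ∞)` lies in the tail `[x + (1 - p) * d, ∞)`.
  have hnear : ∀ x ∉ Ici (s + p * d),
      ∫⁻ t in Ici (s + d), w x t ≤ ⨆ x, ∫⁻ t in Ici (x + (1 - p) * d), w x t := fun x hx =>
    (lintegral_mono_set (Ici_subset_Ici.2 (by simp only [mem_Ici, not_le] at hx; linarith))).trans
      (le_iSup (fun x => ∫⁻ t in Ici (x + (1 - p) * d), w x t) x)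
  have hfar : ∀ x ∈ Ici (s + p * d), ∫⁻ t in Ici (s + d), w x t ≤ ⨆ x, ∫⁻ t, w x t :=
    fun x _ => (setLIntegral_le_lintegral _ _).trans (le_iSup (fun x => ∫⁻ t, w x t) x)
  refine (lintegral_mul_le_of_le_of_le hvs measurableSet_Ici hnear hfar).trans ?_
  gcongr
  · exact le_iSup (fun s => ∫⁻ x, v s x) s
  · exact le_iSup (fun s => ∫⁻ x in Ici (s + p * d), v s x) s

theorem stmt_14 (v w : ℝ → ℝ → ENNReal)
    (hv : Measurable (Function.uncurry v)) (hw : Measurable (Function.uncurry w))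
    (hVfin : (⨆ s, ∫⁻ x, v s x) ≠ ⊤) (hWfin : (⨆ x, ∫⁻ t, w x t) ≠ ⊤) :
    ∀ d : ℝ, 0 ≤ d → ∀ p : ℝ, 0 ≤ p → p ≤ 1 →
      (⨆ s, ∫⁻ t in Ici (s + d), ∫⁻ x, v s x * w x t) ≤
        (⨆ s, ∫⁻ x, v s x) * (⨆ x, ∫⁻ t in Ici (x + (1 - p) * d), w x t) +
          (⨆ s, ∫⁻ x in Ici (s + p * d), v s x) * (⨆ x, ∫⁻ t, w x t) :=
  stmt_14_general v w hv hw
end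

section
/- Let v : ℝ² → ℝ_{≥0} be measurable with R_v(s,t) := ∫_t^∞ v(s,x)dx ≤ A e^{−c(t−s)} V for all s ≤ t, where A ≥ 0, c > 0, V = sup_s ∫ v(s,x)dx < ∞. Then for every 0 < ε < c, the exponentially tilted kernel v_ε(s,t) := v(s,t)e^{ε(t−s)} satisfies sup_s ∫ v_ε(s,t) dt ≤ (1 + Aε/(c−ε)) V. -/
/-!
Write `e^{ε(t-s)} = ∫_{-∞}^t ε e^{ε(x-s)} dx` and swap the integrals (Tonelli): the tilted mass
`∫ v(s,t) e^{ε(t-s)} dt` becomes `∫ R_v(s,x) ε e^{ε(x-s)} dx`. Bound `R_v(s,x)` by `V` for `x ≤ s`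
and by `A e^{-c(x-s)} V` for `x > s`; the two pieces contribute `V` and `A ε V / (c - ε)`.
-/

open MeasureTheory Set Real ENNReal

lemma lintegral_Iic_ofReal_mul_exp_mul_sub {a : ℝ} (ha : 0 < a) (s t : ℝ) :
    ∫⁻ x in Iic t, ENNReal.ofReal (a * exp (a * (x - s))) = ENNReal.ofReal (exp (a * (t - s))) := by
  have hexp : ∀ x, a * exp (a * (x - s)) = a / exp (a * s) * exp (a * x) := fun x => by
    rw [mul_sub, exp_sub]; ring
  simp_rw [hexp]
  rw [← ofReal_integral_eq_lintegral_ofReal ((integrableOn_exp_mul_Iic ha t).const_mul _)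
      (.of_forall fun x => by positivity), integral_const_mul, integral_exp_mul_Iic ha,
    mul_sub, exp_sub]
  congr 1
  field_simp

lemma lintegral_Ioi_ofReal_exp_neg_mul_sub {d : ℝ} (hd : 0 < d) (s : ℝ) :
    ∫⁻ x in Ioi s, ENNReal.ofReal (exp (-d * (x - s))) = ENNReal.ofReal d⁻¹ := by
  have hexp : ∀ x, exp (-d * (x - s)) = exp (d * s) * exp (-d * x) := fun x => by
    rw [← exp_add]; ring_nf
  simp_rw [hexp]
  rw [← ofReal_integral_eq_lintegral_ofReal
      ((integrableOn_exp_mul_Ioi (neg_neg_of_pos hd) s).const_mul _)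
      (.of_forall fun x => by positivity), integral_const_mul,
    integral_exp_mul_Ioi (neg_neg_of_pos hd), neg_div_neg_eq, ← mul_div_assoc, ← exp_add]
  simp

theorem lintegral_mul_lintegral_Iic {μ ν : Measure ℝ} [SFinite μ] [SFinite ν] {f g : ℝ → ℝ≥0∞}
    (hf : Measurable f) (hg : Measurable g) :
    ∫⁻ t, f t * ∫⁻ x in Iic t, g x ∂ν ∂μ = ∫⁻ x, (∫⁻ t in Ici x, f t ∂μ) * g x ∂ν := by
  have hF : Measurable fun p : ℝ × ℝ => if p.2 ≤ p.1 then f p.1 * g p.2 else 0 :=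
    .ite (measurableSet_le measurable_snd measurable_fst) (by fun_prop) measurable_const
  calc ∫⁻ t, f t * ∫⁻ x in Iic t, g x ∂ν ∂μ
      = ∫⁻ t, ∫⁻ x, (if x ≤ t then f t * g x else 0) ∂ν ∂μ := by
        refine lintegral_congr fun t => ?_
        rw [← lintegral_indicator measurableSet_Iic,
          ← lintegral_const_mul _ (hg.indicator measurableSet_Iic)]
        simp only [indicator_apply, mem_Iic, mul_ite, mul_zero]
    _ = ∫⁻ x, ∫⁻ t, (if x ≤ t then f t * g x else 0) ∂μ ∂ν :=
        lintegral_lintegral_swap hF.aemeasurable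
    _ = ∫⁻ x, (∫⁻ t in Ici x, f t ∂μ) * g x ∂ν := by
        refine lintegral_congr fun x => ?_
        rw [← lintegral_indicator measurableSet_Ici,
          ← lintegral_mul_const _ (hf.indicator measurableSet_Ici)]
        simp only [indicator_apply, mem_Ici, ite_mul, zero_mul]

theorem lintegral_mul_exp_le_of_tail_le {f : ℝ → ℝ≥0∞} (hf : Measurable f) {A c ε s : ℝ}
    {V : ℝ≥0∞} (hA : 0 ≤ A) (hε : 0 < ε) (hεc : ε < c) (hV : ∫⁻ x, f x ≤ V)
    (htail : ∀ t, s ≤ t → ∫⁻ x in Ici t, f x ≤ ENNReal.ofReal (A * exp (-c * (t - s))) * V) :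
    ∫⁻ t, f t * ENNReal.ofReal (exp (ε * (t - s))) ≤ ENNReal.ofReal (1 + A * ε / (c - ε)) * V := by
  set φ : ℝ → ℝ≥0∞ := fun x => ENNReal.ofReal (ε * exp (ε * (x - s)))
  have hφ : Measurable φ := by fun_prop
  have hdecay : ∫⁻ x in Ioi s, ENNReal.ofReal (A * exp (-c * (x - s))) * φ x
      = ENNReal.ofReal (A * ε / (c - ε)) := by
    have hexp : ∀ x, ENNReal.ofReal (A * exp (-c * (x - s))) * φ x
        = ENNReal.ofReal (A * ε) * ENNReal.ofReal (exp (-(c - ε) * (x - s))) := fun x => by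
      rw [← ofReal_mul (by positivity), ← ofReal_mul (by positivity)]
      congr 1
      rw [mul_mul_mul_comm, ← exp_add]
      ring_nf
    simp_rw [hexp]
    rw [lintegral_const_mul _ (by fun_prop), lintegral_Ioi_ofReal_exp_neg_mul_sub (by linarith),
      ← ofReal_mul (by positivity), div_eq_mul_inv]
  calc ∫⁻ t, f t * ENNReal.ofReal (exp (ε * (t - s)))
      = ∫⁻ t, f t * ∫⁻ x in Iic t, φ x := by
        simp_rw [φ, lintegral_Iic_ofReal_mul_exp_mul_sub hε]
    _ = ∫⁻ x, (∫⁻ t in Ici x, f t) * φ x := lintegral_mul_lintegral_Iic hf hφ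
    _ = (∫⁻ x in Iic s, (∫⁻ t in Ici x, f t) * φ x)
          + ∫⁻ x in Ioi s, (∫⁻ t in Ici x, f t) * φ x := by
        rw [← compl_Iic]
        exact (lintegral_add_compl _ measurableSet_Iic).symm
    _ ≤ (∫⁻ x in Iic s, V * φ x)
          + ∫⁻ x in Ioi s, V * (ENNReal.ofReal (A * exp (-c * (x - s))) * φ x) := by
        refine add_le_add (setLIntegral_mono' measurableSet_Iic fun x _ => ?_)
          (setLIntegral_mono' measurableSet_Ioi fun x hx => ?_)
        · gcongr
          exact (setLIntegral_le_lintegral _ _).trans hV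
        · rw [← mul_assoc, mul_comm V]
          gcongr
          exact htail x (mem_Ioi.1 hx).le
    _ = ENNReal.ofReal (1 + A * ε / (c - ε)) * V := by
        rw [lintegral_const_mul V hφ, lintegral_const_mul _ (by fun_prop), hdecay,
          lintegral_Iic_ofReal_mul_exp_mul_sub hε, sub_self, mul_zero, exp_zero,
          ofReal_add zero_le_one (by positivity)]
        ring

theorem stmt_17_general (v : ℝ → ℝ → ENNReal) (hv : Measurable (Function.uncurry v))
    (A c : ℝ) (hA : 0 ≤ A)
    (V : ENNReal) (hVdef : V = ⨆ s, ∫⁻ x, v s x)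
    (hR : ∀ s t : ℝ, s ≤ t →
      (∫⁻ x in Ici t, v s x) ≤ ENNReal.ofReal (A * Real.exp (-c * (t - s))) * V) :
    ∀ ε : ℝ, 0 < ε → ε < c →
      (⨆ s, ∫⁻ t, v s t * ENNReal.ofReal (Real.exp (ε * (t - s)))) ≤
        ENNReal.ofReal (1 + A * ε / (c - ε)) * V := by
  intro ε hε hεc
  refine iSup_le fun s => lintegral_mul_exp_le_of_tail_le hv.of_uncurry_left hA hε hεc ?_ (hR s)
  exact hVdef ▸ le_iSup (fun s => ∫⁻ x, v s x) s

theorem stmt_17 (v : ℝ → ℝ → ENNReal) (hv : Measurable (Function.uncurry v))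
    (A c : ℝ) (hA : 0 ≤ A) (hc : 0 < c)
    (V : ENNReal) (hVdef : V = ⨆ s, ∫⁻ x, v s x) (hVfin : V ≠ ⊤)
    (hR : ∀ s t : ℝ, s ≤ t →
      (∫⁻ x in Ici t, v s x) ≤ ENNReal.ofReal (A * Real.exp (-c * (t - s))) * V) :
    ∀ ε : ℝ, 0 < ε → ε < c →
      (⨆ s, ∫⁻ t, v s t * ENNReal.ofReal (Real.exp (ε * (t - s)))) ≤
        ENNReal.ofReal (1 + A * ε / (c - ε)) * V :=
  stmt_17_general v hv A c hA V hVdef hR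
end

section
/- Let H be a nonnegative M×M matrix and u ∈ ℝ_+^M. Suppose x, y ∈ ℝ_+^M both satisfy x = u + H(e^x − 1), y = u + H(e^y − 1) (exponential coordinatewise), x ≼ y, and the matrix H·diag(e^y) has spectral radius strictly less than 1. Then x = y. -/
/-!
The difference `d = y - x ≥ 0` satisfies `d = H (e^y - e^x)`, and convexity of `exp` gives
`e^y - e^x ≤ e^y (y - x)`, so `d ≤ A d` for the nonnegative matrix `A = H diag(e^y)`.
Iterating, `d ≤ Aⁿ d`; by Gelfand's formula `spr(A) < 1` forces `Aⁿ → 0`, hence `d ≤ 0`.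
-/

open Filter Topology
open scoped Matrix

theorem tendsto_pow_atTop_nhds_zero_of_spectralRadius_lt_one {A : Type*} [NormedRing A]
    [NormedAlgebra ℂ A] [CompleteSpace A] {a : A} (ha : spectralRadius ℂ a < 1) :
    Tendsto (a ^ ·) atTop (𝓝 0) := by
  obtain ⟨r, hr, hr1⟩ := exists_between ha
  have hlt : ∀ᶠ n : ℕ in atTop, ‖a ^ n‖ₑ < r ^ n := by
    filter_upwards [(spectrum.pow_nnnorm_pow_one_div_tendsto_nhds_spectralRadius a)
      |>.eventually_lt_const hr, eventually_ge_atTop 1] with n hn hn1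
    calc ‖a ^ n‖ₑ = (‖a ^ n‖ₑ ^ (1 / n : ℝ)) ^ n := by
          rw [← ENNReal.rpow_mul_natCast, one_div_mul_cancel (by positivity), ENNReal.rpow_one]
      _ < r ^ n := ENNReal.pow_lt_pow_left (by omega) hn
  rw [tendsto_zero_iff_enorm_tendsto_zero]
  exact tendsto_of_tendsto_of_tendsto_of_le_of_le' tendsto_const_nhds
    (ENNReal.tendsto_pow_atTop_nhds_zero_of_lt_one hr1) (.of_forall fun _ => zero_le)
    (hlt.mono fun _ => le_of_lt)

theorem tendsto_pow_atTop_nhds_zero_of_forall_mem_spectrum_norm_lt_one {A : Type*} [NormedRing A]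
    [NormedAlgebra ℂ A] [CompleteSpace A] {a : A} (ha : ∀ z ∈ spectrum ℂ a, ‖z‖ < 1) :
    Tendsto (a ^ ·) atTop (𝓝 0) := by
  rcases subsingleton_or_nontrivial A with _ | _
  · simpa only [Subsingleton.elim _ (0 : A)] using tendsto_const_nhds
  · refine tendsto_pow_atTop_nhds_zero_of_spectralRadius_lt_one ?_
    exact_mod_cast spectrum.spectralRadius_lt_of_forall_lt a (r := 1) (by exact_mod_cast ha)

namespace Matrix

variable {n : Type*} [Fintype n]

theorem tendsto_pow_atTop_nhds_zero_of_forall_mem_spectrum_norm_lt_one [DecidableEq n]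
    {A : Matrix n n ℝ} (hA : ∀ z ∈ spectrum ℂ (A.map (Complex.ofReal ·)), ‖z‖ < 1) :
    Tendsto (A ^ ·) atTop (𝓝 0) := by
  -- Any Banach-algebra norm will do: it induces the entrywise topology of `Matrix n n ℂ`.
  let := Matrix.linftyOpNormedRing (n := n) (α := ℂ)
  let := Matrix.linftyOpNormedAlgebra (n := n) (R := ℂ) (α := ℂ)
  have hpow (k : ℕ) : (A.map (Complex.ofReal ·)) ^ k = (A ^ k).map (Complex.ofReal ·) :=
    (map_pow Complex.ofRealHom.mapMatrix A k).symm
  have hC := _root_.tendsto_pow_atTop_nhds_zero_of_forall_mem_spectrum_norm_lt_one hA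
  have hre := (continuous_id.matrix_map Complex.continuous_re).tendsto 0 |>.comp hC
  simpa [Function.comp_def, hpow, map_map] using hre

variable {R : Type*} [Semiring R] [PartialOrder R] [IsOrderedRing R] {A : Matrix n n R}

theorem mulVec_mono (hA : ∀ i j, 0 ≤ A i j) {v w : n → R} (hvw : v ≤ w) :
    A *ᵥ v ≤ A *ᵥ w := fun i =>
  Finset.sum_le_sum fun j _ => mul_le_mul_of_nonneg_left (hvw j) (hA i j)

theorem le_pow_mulVec_of_le_mulVec [DecidableEq n] (hA : ∀ i j, 0 ≤ A i j) {v : n → R}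
    (hv : v ≤ A *ᵥ v) (k : ℕ) : v ≤ (A ^ k) *ᵥ v := by
  induction k with
  | zero => simp
  | succ k ih =>
    calc v ≤ A *ᵥ v := hv
      _ ≤ A *ᵥ ((A ^ k) *ᵥ v) := mulVec_mono hA ih
      _ = (A ^ (k + 1)) *ᵥ v := by rw [mulVec_mulVec, pow_succ']

theorem nonpos_of_le_mulVec [DecidableEq n] [TopologicalSpace R] [OrderClosedTopology R]
    [IsTopologicalSemiring R]
    (hA : ∀ i j, 0 ≤ A i j) (hlim : Tendsto (A ^ ·) atTop (𝓝 0)) {v : n → R}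
    (hv : v ≤ A *ᵥ v) : v ≤ 0 := by
  have hv_lim : Tendsto (fun k : ℕ => (A ^ k) *ᵥ v) atTop (𝓝 0) := by
    simpa [Function.comp_def] using
      ((continuous_id.matrix_mulVec continuous_const).tendsto 0).comp hlim
  exact ge_of_tendsto' hv_lim (le_pow_mulVec_of_le_mulVec hA hv)

end Matrix

theorem Real.exp_sub_exp_le_exp_mul_sub_s18 (x y : ℝ) :
    Real.exp y - Real.exp x ≤ Real.exp y * (y - x) := by
  have h := mul_le_mul_of_nonneg_left (Real.add_one_le_exp (x - y)) (Real.exp_pos y).le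
  rw [← Real.exp_add, add_sub_cancel] at h
  linarith

theorem stmt_18_general {M : ℕ} (H : Matrix (Fin M) (Fin M) ℝ)
    (hH : ∀ i j, 0 ≤ H i j) (u x y : Fin M → ℝ)
    (hfx : x = u + H.mulVec (fun i => Real.exp (x i) - 1))
    (hfy : y = u + H.mulVec (fun i => Real.exp (y i) - 1))
    (hxy : x ≤ y)
    (hspr : ∀ μ ∈ spectrum ℂ
        (((H * Matrix.diagonal fun i => Real.exp (y i)).map (Complex.ofReal ·))),
      ‖μ‖ < 1) :
    x = y := by
  set A := H * Matrix.diagonal fun i => Real.exp (y i)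
  have hA : ∀ i j, 0 ≤ A i j := fun i j => by
    simpa only [A, Matrix.mul_diagonal] using mul_nonneg (hH i j) (Real.exp_pos (y j)).le
  have hsub : y - x ≤ A *ᵥ (y - x) := by
    calc y - x = H *ᵥ fun i => Real.exp (y i) - Real.exp (x i) := by
          conv_lhs => rw [hfy, hfx]
          rw [add_sub_add_left_eq_sub, ← Matrix.mulVec_sub]
          congr 1
          ext i
          exact sub_sub_sub_cancel_right _ _ _
      _ ≤ H *ᵥ (Matrix.diagonal (fun i => Real.exp (y i)) *ᵥ (y - x)) := by
          refine Matrix.mulVec_mono hH fun i => ?_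
          simpa [Matrix.mulVec_diagonal] using Real.exp_sub_exp_le_exp_mul_sub_s18 (x i) (y i)
      _ = A *ᵥ (y - x) := Matrix.mulVec_mulVec _ _ _
  have hlim := Matrix.tendsto_pow_atTop_nhds_zero_of_forall_mem_spectrum_norm_lt_one hspr
  exact le_antisymm hxy (sub_nonpos.mp (Matrix.nonpos_of_le_mulVec hA hlim hsub))

theorem stmt_18 {M : ℕ} (H : Matrix (Fin M) (Fin M) ℝ)
    (hH : ∀ i j, 0 ≤ H i j) (u x y : Fin M → ℝ)
    (hu : 0 ≤ u) (hx : 0 ≤ x) (hy : 0 ≤ y)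
    (hfx : x = u + H.mulVec (fun i => Real.exp (x i) - 1))
    (hfy : y = u + H.mulVec (fun i => Real.exp (y i) - 1))
    (hxy : x ≤ y)
    (hspr : ∀ μ ∈ spectrum ℂ
        (((H * Matrix.diagonal fun i => Real.exp (y i)).map (Complex.ofReal ·))),
      ‖μ‖ < 1) :
    x = y :=
  stmt_18_general H hH u x y hfx hfy hxy hspr
end

section
/- Let H be a nonnegative M×M matrix, let E = { u ∈ ℝ_+^M : ∃ x ∈ ℝ_+^M, x = u + H(e^x − 1) } (exponential coordinatewise). Then E is convex, and downward closed in ℝ_+^M: if u ∈ E and 0 ≼ v ≼ u then v ∈ E. -/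
/-!
Since `H ≥ 0`, the map `Φ_u x = u + H (e^x - 1)` is monotone, and `Φ_u 0 = u ≥ 0`; so by
Knaster–Tarski on the order interval `[0, b]` it has a nonnegative fixed point as soon as some
`b ≥ 0` is a supersolution, `Φ_u b ≤ b`. A fixed point for `u` is a supersolution for every
`0 ≤ v ≤ u`, and by convexity of `exp` the combination `s x + (1 - s) y` of fixed points for `u`
and `v` is a supersolution for `s u + (1 - s) v`.
-/

open Real Matrix

theorem exists_isFixedPt_mem_Icc {α : Type*} [ConditionallyCompleteLattice α] {f : α → α}
    (hf : Monotone f) {a b : α} (hab : a ≤ b) (ha : a ≤ f a) (hb : f b ≤ b) :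
    ∃ x ∈ Set.Icc a b, Function.IsFixedPt f x := by
  have : Fact (a ≤ b) := ⟨hab⟩
  let g : Set.Icc a b →o Set.Icc a b :=
    { toFun := fun y => ⟨f y, ha.trans (hf y.2.1), (hf y.2.2).trans hb⟩
      monotone' := fun _ _ h => hf h }
  exact ⟨g.lfp, g.lfp.2, congrArg Subtype.val g.map_lfp⟩

section

variable {n : Type*} [Fintype n] {H : Matrix n n ℝ}

theorem Matrix.monotone_mulVec (hH : ∀ i j, 0 ≤ H i j) : Monotone (H *ᵥ ·) :=
  fun _ _ hab i => Finset.sum_le_sum fun j _ => mul_le_mul_of_nonneg_left (hab j) (hH i j)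

theorem exists_fixedPoint_of_supersolution (hH : ∀ i j, 0 ≤ H i j) {u b : n → ℝ}
    (hu : 0 ≤ u) (hb : 0 ≤ b) (hsuper : u + H *ᵥ (fun i => exp (b i) - 1) ≤ b) :
    ∃ x : n → ℝ, 0 ≤ x ∧ x = u + H *ᵥ (fun i => exp (x i) - 1) := by
  have hmono : Monotone fun x : n → ℝ => u + H *ᵥ (fun i => exp (x i) - 1) :=
    fun x y hxy => add_le_add_right
      (monotone_mulVec hH fun i => sub_le_sub_right (exp_le_exp.2 (hxy i)) 1) u
  have hzero : u + H *ᵥ (fun i => exp ((0 : n → ℝ) i) - 1) = u := by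
    simp [funext_iff, mulVec, dotProduct]
  obtain ⟨x, hx, hfix⟩ := exists_isFixedPt_mem_Icc hmono hb (hu.trans hzero.ge) hsuper
  exact ⟨x, hx.1, hfix.symm⟩

theorem mulVec_exp_sub_one_combo_le (hH : ∀ i j, 0 ≤ H i j) (x y : n → ℝ) {p q : ℝ}
    (hp : 0 ≤ p) (hq : 0 ≤ q) (hpq : p + q = 1) :
    H *ᵥ (fun i => exp ((p • x + q • y) i) - 1) ≤
      p • H *ᵥ (fun i => exp (x i) - 1) + q • H *ᵥ (fun i => exp (y i) - 1) := by
  have hexp : (fun i => exp ((p • x + q • y) i) - 1) ≤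
      p • (fun i => exp (x i) - 1) + q • (fun i => exp (y i) - 1) := fun i => by
    have := convexOn_exp.2 (Set.mem_univ (x i)) (Set.mem_univ (y i)) hp hq hpq
    simp only [smul_eq_mul, Pi.add_apply, Pi.smul_apply] at this ⊢
    linear_combination this + hpq
  simpa only [mulVec_add, mulVec_smul] using monotone_mulVec hH hexp

end

theorem stmt_19 {M : ℕ} (H : Matrix (Fin M) (Fin M) ℝ)
    (hH : ∀ i j, 0 ≤ H i j)
    (E : Set (Fin M → ℝ))
    (hE : E = {u | 0 ≤ u ∧
      ∃ x : Fin M → ℝ, 0 ≤ x ∧ x = u + H.mulVec (fun i => Real.exp (x i) - 1)}) :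
    Convex ℝ E ∧ ∀ u ∈ E, ∀ v : Fin M → ℝ, 0 ≤ v → v ≤ u → v ∈ E := by
  subst hE
  constructor
  · rintro u ⟨hu, x, hx, hxu⟩ v ⟨hv, y, hy, hyv⟩ p q hp hq hpq
    have hcomb {a b : Fin M → ℝ} (ha : 0 ≤ a) (hb : 0 ≤ b) : 0 ≤ p • a + q • b :=
      add_nonneg (smul_nonneg hp ha) (smul_nonneg hq hb)
    refine ⟨hcomb hu hv, exists_fixedPoint_of_supersolution hH (hcomb hu hv) (hcomb hx hy) ?_⟩
    calc p • u + q • v + H *ᵥ (fun i => exp ((p • x + q • y) i) - 1)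
        ≤ p • u + q • v + (p • H *ᵥ (fun i => exp (x i) - 1)
            + q • H *ᵥ (fun i => exp (y i) - 1)) :=
          add_le_add_right (mulVec_exp_sub_one_combo_le hH x y hp hq hpq) _
      _ = p • (u + H *ᵥ (fun i => exp (x i) - 1))
            + q • (v + H *ᵥ (fun i => exp (y i) - 1)) := by module
      _ = p • x + q • y := by rw [← hxu, ← hyv]
  · rintro u ⟨-, x, hx, hxu⟩ v hv hvu
    exact ⟨hv, exists_fixedPoint_of_supersolution hH hv hx
      ((add_le_add_left hvu _).trans_eq hxu.symm)⟩
end
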